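/- arXiv:0903.2216 — 5 statements merged into one kernel-verified Lean document; each statement's English description precedes it below -/
import Mathlib

section
/- If x, y, r, t are nonzero real numbers such that x/y, (x+r)/(y+t), and (x+2r)/(y+2t) are all rational (with y, y+t, y+2t nonzero), then r/t is rational. -/
theorem stmt_0 (x y r t : ℝ) (hx : x ≠ 0) (hy : y ≠ 0) (hr : r ≠ 0) (ht : t ≠ 0)
    (hyt : y + t ≠ 0) (hyt2 : y + 2 * t ≠ 0)
    (h1 : ∃ q : ℚ, (q : ℝ) = x / y)
    (h2 : ∃ q : ℚ, (q : ℝ) = (x + r) / (y + t))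
    (h3 : ∃ q : ℚ, (q : ℝ) = (x + 2 * r) / (y + 2 * t)) :
    ∃ q : ℚ, (q : ℝ) = r / t := by
  obtain ⟨a, ha⟩ := h1
  obtain ⟨b, hb⟩ := h2
  obtain ⟨c, hc⟩ := h3
  have e1 : x = (a : ℝ) * y := by field_simp at ha; linarith
  have e2 : x + r = (b : ℝ) * (y + t) := by field_simp at hb; linarith
  have e3 : x + 2 * r = (c : ℝ) * (y + 2 * t) := by field_simp at hc; linarith
  have key : (2 * (b : ℝ) - a - c) * y = 2 * ((c : ℝ) - b) * t := by nlinarith [e1, e2, e3]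
  by_cases h : (2 * b - a - c : ℚ) = 0
  · have hc0 : (c : ℝ) = b := by
      have h' : (2 * (b : ℝ) - a - c) = 0 := by exact_mod_cast h
      have : 2 * ((c : ℝ) - b) * t = 0 := by rw [← key, h']; ring
      rcases mul_eq_zero.mp this with h2 | h2
      · linarith
      · exact absurd h2 ht
    refine ⟨b, ?_⟩
    have hrt : r = (b : ℝ) * t := by linear_combination e3 - e2 + (y + 2*t) * hc0
    rw [hrt, mul_div_assoc, div_self ht, mul_one]
  · refine ⟨(b - a) * (2 * (c - b)) / (2 * b - a - c) + b, ?_⟩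
    have h' : (2 * (b : ℝ) - a - c) ≠ 0 := by exact_mod_cast h
    have hry : r = ((b : ℝ) - a) * y + b * t := by linear_combination e2 - e1
    push_cast
    rw [div_add' _ _ _ h', div_eq_div_iff h' ht]
    linear_combination (-((b : ℝ) - a)) * key - (2 * (b : ℝ) - a - c) * hry
end

section
/- Let 0 < a < b < 1, let k ≥ 1, and define e_1 = ℓ(k) and e_{j} = e_{j-1} + ℓ(k) if a^{e_{j-1}+ℓ(k)+1} < b^{jk}, and e_j = e_{j-1} + ℓ(k) + 1 otherwise, where ℓ(k) = max{k' : b^k ≤ a^{k'}}. Then for all j ≥ 1, a^{e_j} b^{-jk} ∈ [1, a^{-1}), i.e., the fractional part T^j(0) of j·(k log b/log a − ℓ(k)) satisfies T^j(0) = log(a^{e_j} b^{−jk})/(−log a). -/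
open Real

theorem stmt_4 (a b : ℝ) (ha : 0 < a) (hab : a < b) (hb : b < 1)
    (k : ℕ) (hk : 1 ≤ k) (ℓ : ℕ)
    (hℓ : IsGreatest {k' : ℕ | b ^ k ≤ a ^ k'} ℓ)
    (e : ℕ → ℕ) (he1 : e 1 = ℓ)
    (herec : ∀ j, 2 ≤ j →
      (a ^ (e (j - 1) + ℓ + 1) < b ^ (j * k) → e j = e (j - 1) + ℓ) ∧
      (¬ a ^ (e (j - 1) + ℓ + 1) < b ^ (j * k) → e j = e (j - 1) + ℓ + 1)) :
    ∀ j, 1 ≤ j →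
      (1 ≤ a ^ (e j) * (b ^ (j * k))⁻¹ ∧ a ^ (e j) * (b ^ (j * k))⁻¹ < a⁻¹) ∧
      Int.fract ((j : ℝ) * ((k : ℝ) * log b / log a)) =
        log (a ^ (e j) * (b ^ (j * k))⁻¹) / (-log a) := by
  have ha1 : a < 1 := hab.trans hb
  have hb0 : 0 < b := ha.trans hab
  have hla : log a < 0 := Real.log_neg ha ha1
  have hℓ1 : b ^ k ≤ a ^ ℓ := hℓ.1
  have hℓ2 : a ^ (ℓ + 1) < b ^ k := by
    by_contra h
    push_neg at h
    have := hℓ.2 h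
    omega
  have main : ∀ j, 1 ≤ j → b ^ (j * k) ≤ a ^ (e j) ∧ a ^ (e j + 1) < b ^ (j * k) := by
    intro j hj
    induction j, hj using Nat.le_induction with
    | base => rw [he1, one_mul]; exact ⟨hℓ1, hℓ2⟩
    | succ n hn ih =>
      have hrec := herec (n + 1) (by omega)
      have hsub : n + 1 - 1 = n := by omega
      rw [hsub] at hrec
      have hsplit : b ^ ((n + 1) * k) = b ^ (n * k) * b ^ k := by
        rw [add_mul, one_mul, pow_add]
      by_cases hc : a ^ (e n + ℓ + 1) < b ^ ((n + 1) * k)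
      · rw [hrec.1 hc]
        refine ⟨?_, hc⟩
        rw [hsplit, pow_add]
        exact mul_le_mul ih.1 hℓ1 (pow_nonneg hb0.le k) (pow_nonneg ha.le _)
      · rw [hrec.2 hc]
        refine ⟨le_of_not_gt hc, ?_⟩
        rw [hsplit, show e n + ℓ + 1 + 1 = (e n + 1) + (ℓ + 1) by ring, pow_add]
        exact mul_lt_mul'' ih.2 hℓ2 (pow_nonneg ha.le _) (pow_nonneg ha.le _)
  intro j hj
  obtain ⟨h1, h2⟩ := main j hj
  have hbp : (0 : ℝ) < b ^ (j * k) := pow_pos hb0 _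
  have hap : (0 : ℝ) < a ^ (e j) := pow_pos ha _
  have part1 : 1 ≤ a ^ (e j) * (b ^ (j * k))⁻¹ := by
    rw [← div_eq_mul_inv, le_div_iff₀ hbp, one_mul]
    exact h1
  have part2 : a ^ (e j) * (b ^ (j * k))⁻¹ < a⁻¹ := by
    rw [← div_eq_mul_inv, div_lt_iff₀ hbp]
    rw [pow_succ] at h2
    calc a ^ (e j) = a⁻¹ * (a ^ (e j) * a) := by field_simp
    _ < a⁻¹ * b ^ (j * k) := mul_lt_mul_of_pos_left h2 (inv_pos.mpr ha)
  refine ⟨⟨part1, part2⟩, ?_⟩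
  -- log inequalities
  set x : ℝ := (j : ℝ) * ((k : ℝ) * log b / log a) with hx
  have hxval : x = ((j * k : ℕ) : ℝ) * log b / log a := by
    push_cast; ring
  have hlog1 : ((j * k : ℕ) : ℝ) * log b ≤ (e j : ℝ) * log a := by
    have := Real.log_le_log hbp h1
    rwa [Real.log_pow, Real.log_pow] at this
  have hlog2 : ((e j : ℝ) + 1) * log a < ((j * k : ℕ) : ℝ) * log b := by
    have := Real.log_lt_log (pow_pos ha _) h2
    rw [Real.log_pow, Real.log_pow] at this
    push_cast at this ⊢
    linarith
  have hxe : (e j : ℝ) ≤ x := by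
    rw [hxval, le_div_iff_of_neg hla]
    exact hlog1
  have hxe2 : x < (e j : ℝ) + 1 := by
    rw [hxval, div_lt_iff_of_neg hla]
    exact hlog2
  have hfl : ⌊x⌋ = (e j : ℤ) := by
    rw [Int.floor_eq_iff]
    constructor
    · exact_mod_cast hxe
    · push_cast; exact hxe2
  have hfr : Int.fract x = x - (e j : ℝ) := by
    rw [Int.fract, hfl]; push_cast; ring
  rw [hfr]
  have hlogmul : log (a ^ (e j) * (b ^ (j * k))⁻¹)
      = (e j : ℝ) * log a - ((j * k : ℕ) : ℝ) * log b := by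
    rw [Real.log_mul (ne_of_gt hap) (inv_ne_zero (ne_of_gt hbp)), Real.log_inv,
      Real.log_pow, Real.log_pow]
    ring
  have hla0 : log a ≠ 0 := ne_of_lt hla
  rw [hlogmul, hxval, div_neg, ← neg_div, neg_sub, sub_div,
    mul_div_cancel_right₀ _ hla0]
end

section
/- Let 0 < a < b < 1 and k ≥ 1, with e_j defined by e_1 = ℓ(k) and the recursion e_j = e_{j-1} + ℓ(k) or e_{j-1} + ℓ(k) + 1 so that a^{e_j} b^{−jk} ∈ [1, a^{−1}). For a positive integer j let s(j) be the unique integer with e_{s(j)−1} < jk ≤ e_{s(j)}. Then j·(log a/log b) ≤ s(j) < j·(log a/log b) + (log a)/(k log b) + 1. -/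
open Real

theorem stmt_5 (a b : ℝ) (ha : 0 < a) (hab : a < b) (hb : b < 1)
    (k : ℕ) (hk : 1 ≤ k)
    (e : ℕ → ℕ)
    (he : ∀ j, 1 ≤ j → 1 ≤ a ^ (e j) * (b ^ (j * k))⁻¹ ∧ a ^ (e j) * (b ^ (j * k))⁻¹ < a⁻¹)
    (s : ℕ → ℕ)
    (hs : ∀ j, 1 ≤ j → e (s j - 1) < j * k ∧ j * k ≤ e (s j)) :
    ∀ j : ℕ, 1 ≤ j →
      (j : ℝ) * (log a / log b) ≤ (s j : ℝ) ∧
      (s j : ℝ) < (j : ℝ) * (log a / log b) + log a / ((k : ℝ) * log b) + 1 := by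
  have hb0 : (0:ℝ) < b := ha.trans hab
  have hLa : log a < 0 := Real.log_neg ha (hab.trans hb)
  have hLb : log b < 0 := Real.log_neg hb0 hb
  have hk1 : (1:ℝ) ≤ (k:ℝ) := by exact_mod_cast hk
  have key : ∀ i, 1 ≤ i → ((i * k : ℕ) : ℝ) * log b ≤ (e i : ℝ) * log a ∧
      ((e i : ℝ) + 1) * log a < ((i * k : ℕ) : ℝ) * log b := by
    intro i hi
    obtain ⟨h1, h2⟩ := he i hi
    have hbp : (0:ℝ) < b ^ (i * k) := pow_pos hb0 _
    have hap : (0:ℝ) < a ^ (e i) := pow_pos ha _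
    rw [← div_eq_mul_inv] at h1 h2
    have hle : b ^ (i * k) ≤ a ^ (e i) := (one_le_div hbp).mp h1
    have hlog1 : log (b ^ (i * k)) ≤ log (a ^ (e i)) := Real.log_le_log hbp hle
    rw [Real.log_pow, Real.log_pow] at hlog1
    have hlt : a ^ (e i) < a⁻¹ * b ^ (i * k) := by
      rw [div_lt_iff₀ hbp] at h2; linarith [h2]
    have hpos : (0:ℝ) < a⁻¹ * b ^ (i * k) := mul_pos (inv_pos.mpr ha) hbp
    have hlog2 : log (a ^ (e i)) < log (a⁻¹ * b ^ (i * k)) := Real.log_lt_log hap hlt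
    rw [Real.log_pow, Real.log_mul (ne_of_gt (inv_pos.mpr ha)) (ne_of_gt hbp),
      Real.log_inv, Real.log_pow] at hlog2
    constructor
    · exact hlog1
    · linarith
  intro j hj
  obtain ⟨hs1, hs2⟩ := hs j hj
  have hm : 1 ≤ s j := by
    rcases Nat.eq_zero_or_pos (s j) with h | h
    · rw [h] at hs1 hs2; simp at hs1 hs2; omega
    · exact h
  obtain ⟨k1, _⟩ := key (s j) hm
  have hjk : ((j * k : ℕ) : ℝ) ≤ (e (s j) : ℝ) := by exact_mod_cast hs2
  have hchain : ((s j : ℕ) : ℝ) * (k : ℝ) * log b ≤ (j : ℝ) * (k : ℝ) * log a := by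
    have h1 : (e (s j) : ℝ) * log a ≤ ((j * k : ℕ) : ℝ) * log a :=
      mul_le_mul_of_nonpos_right hjk hLa.le
    push_cast at k1 h1 ⊢
    linarith
  constructor
  · rw [← mul_div_assoc, div_le_iff_of_neg hLb]
    nlinarith [hchain, hk1, hLb, hLa]
  · have hposL : 0 < log a / log b := div_pos_of_neg_of_neg hLa hLb
    have hkLb : (k : ℝ) * log b < 0 := mul_neg_of_pos_of_neg (by linarith) hLb
    have hposK : 0 < log a / ((k : ℝ) * log b) := div_pos_of_neg_of_neg hLa hkLb
    rcases eq_or_lt_of_le hm with h1 | h2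
    · have hj0 : (1:ℝ) ≤ (j:ℝ) := by exact_mod_cast hj
      have : 0 < (j : ℝ) * (log a / log b) := by positivity
      rw [← h1]; push_cast; linarith
    · have hm1 : 1 ≤ s j - 1 := by omega
      obtain ⟨_, k2⟩ := key (s j - 1) hm1
      have hcast : ((s j - 1 : ℕ) : ℝ) = (s j : ℝ) - 1 := by
        push_cast [Nat.cast_sub hm]; ring
      have he1 : (e (s j - 1) : ℝ) + 1 ≤ ((j * k : ℕ) : ℝ) := by
        have : e (s j - 1) + 1 ≤ j * k := hs1
        exact_mod_cast this
      have hstep : ((j * k : ℕ) : ℝ) * log a < ((s j : ℝ) - 1) * (k : ℝ) * log b := by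
        have h3 : ((j * k : ℕ) : ℝ) * log a ≤ ((e (s j - 1) : ℝ) + 1) * log a :=
          mul_le_mul_of_nonpos_right he1 hLa.le
        push_cast [Nat.cast_sub hm] at k2 h3 ⊢
        linarith
      have hfin : (j : ℝ) * log a < ((s j : ℝ) - 1) * log b := by
        push_cast at hstep
        nlinarith [hstep, hk1, hLb, hLa]
      have h4 : (s j : ℝ) - 1 < (j : ℝ) * log a / log b :=
        (lt_div_iff_of_neg hLb).mpr hfin
      have h5 : (j : ℝ) * (log a / log b) = (j : ℝ) * log a / log b := by ring
      linarith
end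

section
/- With notation as above (0 < a < b < 1, integers m, n ≥ 1, ℓ(k) = max{k' : b^k ≤ a^{k'}}, γ = log m/(−log b) + log n/(−log a)), for all integers 0 ≤ j < k one has m^{k−j} n^{ℓ(k)−ℓ(j)} < n · b^{−(k−j)γ}. -/
open Real

/-! Since `b ^ (-γ) = m * n ^ (log b / log a)`, the right-hand side equals
`n * m ^ (k - j) * n ^ ((k - j) * log b / log a)`, and the claim reduces to
`ℓ k - ℓ j < 1 + (k - j) * log b / log a`, which holds for any difference of floors. -/

theorem Int.cast_floor_sub_floor_lt {R : Type*} [CommRing R] [LinearOrder R]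
    [IsStrictOrderedRing R] [FloorRing R] (x y : R) : ((⌊x⌋ - ⌊y⌋ : ℤ) : R) < 1 + (x - y) := by
  push_cast
  linarith [Int.floor_le x, Int.sub_one_lt_floor y]

theorem Real.rpow_neg_mul_log_div_add_log_div {a b m n : ℝ} (hb : 0 < b) (hlb : log b ≠ 0)
    (hm : 0 < m) (hn : 0 < n) (x : ℝ) :
    b ^ (-x * (log m / (-log b) + log n / (-log a))) = m ^ x * n ^ (x * (log b / log a)) := by
  rw [rpow_def_of_pos hb, rpow_def_of_pos hm, rpow_def_of_pos hn, ← exp_add]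
  congr 1
  field_simp
  ring

theorem stmt_8 (m n : ℕ) (hm : 1 ≤ m) (hn : 2 ≤ n)
    (a b : ℝ) (ha : 0 < a) (hab : a < b) (hb : b < 1)
    (ℓ : ℕ → ℤ) (hℓ : ∀ k : ℕ, ℓ k = ⌊(k : ℝ) * log b / log a⌋)
    (γ : ℝ) (hγ : γ = log m / (-log b) + log n / (-log a))
    (j k : ℕ) (hjk : j < k) :
    (m : ℝ) ^ (k - j) * (n : ℝ) ^ (ℓ k - ℓ j) <
      (n : ℝ) * b ^ (-((k : ℝ) - (j : ℝ)) * γ) := by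
  have hb0 : 0 < b := ha.trans hab
  have hm0 : (0 : ℝ) < m := by exact_mod_cast hm
  have hn1 : (1 : ℝ) < n := by exact_mod_cast hn
  have hexp : ((ℓ k - ℓ j : ℤ) : ℝ) < 1 + ((k - j : ℕ) : ℝ) * (log b / log a) := by
    rw [hℓ, hℓ, Nat.cast_sub hjk.le]
    exact (Int.cast_floor_sub_floor_lt _ _).trans_eq (by ring)
  rw [hγ, rpow_neg_mul_log_div_add_log_div hb0 (log_neg hb0 hb).ne hm0 (by positivity),
    ← Nat.cast_sub hjk.le, rpow_natCast, ← rpow_intCast, mul_left_comm]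
  gcongr
  calc (n : ℝ) ^ ((ℓ k - ℓ j : ℤ) : ℝ)
      < (n : ℝ) ^ (1 + ((k - j : ℕ) : ℝ) * (log b / log a)) := rpow_lt_rpow_of_exponent_lt hn1 hexp
    _ = _ := by rw [rpow_add (by positivity), rpow_one]
end

section
/- (Asymptotics of multinomial entropy) Let q : D → (0,1] be a probability vector on a finite set D, r(k) = Σ_d ⌈k q(d)⌉, and N_k = r(k)!/∏_d ⌈k q(d)⌉!. Then (1/k) log N_k → −Σ_{d∈D} q(d) log q(d) as k → ∞. -/
/-!
By Stirling, `log m! = m log m - m + O(1 + log m)`. In `log (n! / ∏ (a i)!)` with `n = ∑ a i`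
the linear terms cancel, so `log N = ∑ negMulLog (a i) - negMulLog n + O(|D| (1 + log n))`.
As `negMulLog (x / k) = negMulLog x / k + x * negMulLog k⁻¹`, and the second terms cancel again,
`(log N) / k = ∑ negMulLog (a i / k) - negMulLog (n / k) + o(1)`. This tends to
`∑ negMulLog (q i)` by continuity of `negMulLog`, because `a i / k → q i` and `n / k → 1`.
-/

open Real Filter Topology Finset
open scoped Nat

namespace Stirling

theorem log_factorial_le (n : ℕ) : log n ! ≤ n * log n - n + log n / 2 + 1 := by
  rcases n with _ | n
  · simp
  have h : log (stirlingSeq (n + 1)) ≤ log (stirlingSeq 1) :=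
    log_stirlingSeq'_antitone (Nat.zero_le n)
  rw [log_stirlingSeq_formula, stirlingSeq_one] at h
  have hm : (0 : ℝ) < (n + 1 : ℕ) := by positivity
  generalize n + 1 = m at h hm ⊢
  rw [log_div (exp_pos 1).ne' (by positivity), log_exp, log_sqrt zero_le_two,
    log_mul two_ne_zero hm.ne', log_div hm.ne' (exp_pos 1).ne', log_exp] at h
  linarith

theorem abs_log_factorial_sub_le (n : ℕ) : |log n ! - (n * log n - n)| ≤ 1 + log n := by
  rcases eq_or_ne n 0 with rfl | hn
  · simp
  have hlow := le_log_factorial_stirling hn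
  have : 0 ≤ log (2 * π) := log_nonneg (by linarith [pi_gt_three])
  rw [abs_le]
  constructor <;> linarith [log_factorial_le n, log_natCast_nonneg n]

end Stirling

lemma Real.sum_negMulLog_div_sub {ι : Type*} (s : Finset ι) (x : ι → ℝ) (k : ℝ) :
    ∑ i ∈ s, negMulLog (x i / k) - negMulLog ((∑ i ∈ s, x i) / k) =
      (∑ i ∈ s, negMulLog (x i) - negMulLog (∑ i ∈ s, x i)) / k := by
  simp only [div_eq_mul_inv, negMulLog_mul, sum_add_distrib, ← sum_mul, ← mul_sum]
  ring

theorem abs_log_multinomial_sub_le {ι : Type*} (s : Finset ι) (f : ι → ℕ) :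
    |log (Nat.multinomial s f) - (∑ i ∈ s, negMulLog (f i) - negMulLog (∑ i ∈ s, f i : ℕ))| ≤
      (#s + 1) * (1 + log (∑ i ∈ s, f i : ℕ)) := by
  set n := ∑ i ∈ s, f i
  have hlog : log (Nat.multinomial s f) = log n ! - ∑ i ∈ s, log (f i)! := by
    have := congrArg (fun m : ℕ => log m) (Nat.multinomial_spec s f)
    simp only [Nat.cast_mul, Nat.cast_prod] at this
    rw [log_mul (prod_pos fun i _ => by positivity).ne'
        (by exact_mod_cast (Nat.multinomial_pos s f).ne'),
      log_prod fun i _ => by positivity] at this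
    linarith
  have hsum : (n : ℝ) = ∑ i ∈ s, (f i : ℝ) := by push_cast [n]; rfl
  have hlog_le : ∀ i ∈ s, log (f i) ≤ log n := fun i hi => by
    rcases (f i).eq_zero_or_pos with h | h
    · simp [h, log_natCast_nonneg]
    · exact log_le_log (by exact_mod_cast h)
        (by exact_mod_cast single_le_sum (fun _ _ => Nat.zero_le _) hi)
  have herr : log n ! - ∑ i ∈ s, log (f i)! - (∑ i ∈ s, negMulLog (f i) - negMulLog n) =
      (log n ! - (n * log n - n)) - ∑ i ∈ s, (log (f i)! - (f i * log (f i) - f i)) := by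
    simp only [negMulLog, sum_sub_distrib, ← hsum, neg_mul, sum_neg_distrib]
    ring
  rw [hlog, herr]
  calc _ ≤ |log n ! - (n * log n - n)| + ∑ i ∈ s, |log (f i)! - (f i * log (f i) - f i)| :=
        (abs_sub _ _).trans (add_le_add_right (abs_sum_le_sum_abs _ _) _)
    _ ≤ (1 + log n) + ∑ _i ∈ s, (1 + log n) := by
        gcongr with i hi
        · exact Stirling.abs_log_factorial_sub_le n
        · exact (Stirling.abs_log_factorial_sub_le (f i)).trans (by linarith [hlog_le i hi])
    _ = (#s + 1) * (1 + log n) := by rw [sum_const, nsmul_eq_mul]; ring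

theorem tendsto_log_div_of_tendsto_div {u : ℕ → ℝ} {L : ℝ} (hL : 0 < L)
    (hu : Tendsto (fun k => u k / k) atTop (𝓝 L)) :
    Tendsto (fun k => log (u k) / k) atTop (𝓝 0) := by
  have hquot : Tendsto (fun k : ℕ => log (u k / k) / k) atTop (𝓝 0) :=
    ((continuousAt_log hL.ne').tendsto.comp hu).div_atTop tendsto_natCast_atTop_atTop
  have hlogk : Tendsto (fun k : ℕ => log k / k) atTop (𝓝 0) := by
    simpa [Function.comp_def] using (tendsto_pow_log_div_mul_add_atTop 1 0 1 one_ne_zero).comp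
      tendsto_natCast_atTop_atTop
  rw [← zero_add 0]
  refine (hquot.add hlogk).congr' ?_
  filter_upwards [hu.eventually (lt_mem_nhds hL), eventually_ne_atTop 0] with k hpos hk
  have huk : u k ≠ 0 := by rintro h; simp [h] at hpos
  rw [← add_div, log_div huk (Nat.cast_ne_zero.2 hk), sub_add_cancel]

theorem tendsto_log_multinomial_div {ι : Type*} [Fintype ι] {a : ι → ℕ → ℕ} {p : ι → ℝ}
    (hp : ∑ i, p i = 1) (ha : ∀ i, Tendsto (fun k : ℕ => (a i k : ℝ) / k) atTop (𝓝 (p i))) :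
    Tendsto (fun k : ℕ => log (Nat.multinomial univ (a · k)) / k) atTop
      (𝓝 (-∑ i, p i * log (p i))) := by
  have hsum : Tendsto (fun k : ℕ => ((∑ i, a i k : ℕ) : ℝ) / k) atTop (𝓝 1) := by
    simpa [sum_div, hp] using tendsto_finsetSum univ fun i _ => ha i
  have hent : Tendsto (fun k : ℕ => ∑ i, negMulLog (a i k / k) - negMulLog ((∑ i, a i k : ℕ) / k))
      atTop (𝓝 (-∑ i, p i * log (p i))) := by
    simpa [negMulLog] using (tendsto_finsetSum univ fun i _ =>
      (continuous_negMulLog.tendsto _).comp (ha i)).sub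
      ((continuous_negMulLog.tendsto 1).comp hsum)
  have herr : Tendsto (fun k : ℕ => (log (Nat.multinomial univ (a · k)) -
      (∑ i, negMulLog (a i k) - negMulLog (∑ i, a i k : ℕ))) / k) atTop (𝓝 0) := by
    have hbound := (((tendsto_const_nhds (x := (1 : ℝ))).div_atTop tendsto_natCast_atTop_atTop).add
      (tendsto_log_div_of_tendsto_div one_pos hsum)).const_mul (Fintype.card ι + 1 : ℝ)
    refine squeeze_zero_norm
      (a := fun k => (Fintype.card ι + 1 : ℝ) * ((1 + log (∑ i, a i k : ℕ)) / k)) (fun k => ?_) ?_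
    · rw [norm_div, Real.norm_natCast, ← mul_div_assoc]
      gcongr
      simpa using abs_log_multinomial_sub_le univ (a · k)
    · simpa [add_div] using hbound
  refine (by simpa using herr.add hent : Tendsto _ atTop _).congr fun k => ?_
  rw [sum_negMulLog_div_sub, ← add_div, sub_add_cancel]

theorem stmt_14_general (D : Type*) [Fintype D]
    (q : D → ℝ) (hq0 : ∀ d, 0 < q d) (hqsum : ∑ d, q d = 1)
    (r : ℕ → ℕ) (hr : ∀ k, r k = ∑ d, ⌈(k : ℝ) * q d⌉₊)
    (N : ℕ → ℕ)
    (hN : ∀ k, N k = Nat.factorial (r k) / ∏ d, Nat.factorial ⌈(k : ℝ) * q d⌉₊) :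
    Tendsto (fun k : ℕ => (1 / (k : ℝ)) * Real.log (N k)) atTop
      (nhds (-∑ d, q d * Real.log (q d))) := by
  have hNk : ∀ k, N k = Nat.multinomial univ (fun d => ⌈(k : ℝ) * q d⌉₊) := fun k => by
    rw [hN, hr, Nat.multinomial]
  have hceil : ∀ d, Tendsto (fun k : ℕ => (⌈(k : ℝ) * q d⌉₊ : ℝ) / k) atTop (𝓝 (q d)) := fun d => by
    simpa [mul_comm, Function.comp_def] using
      (tendsto_nat_ceil_mul_div_atTop (hq0 d).le).comp tendsto_natCast_atTop_atTop
  simp only [hNk, one_div_mul_eq_div]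
  exact tendsto_log_multinomial_div hqsum hceil

theorem stmt_14 (D : Type*) [Fintype D]
    (q : D → ℝ) (hq0 : ∀ d, 0 < q d) (hq1 : ∀ d, q d ≤ 1) (hqsum : ∑ d, q d = 1)
    (r : ℕ → ℕ) (hr : ∀ k, r k = ∑ d, ⌈(k : ℝ) * q d⌉₊)
    (N : ℕ → ℕ)
    (hN : ∀ k, N k = Nat.factorial (r k) / ∏ d, Nat.factorial ⌈(k : ℝ) * q d⌉₊) :
    Tendsto (fun k : ℕ => (1 / (k : ℝ)) * Real.log (N k)) atTop
      (nhds (-∑ d, q d * Real.log (q d))) :=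
  stmt_14_general D q hq0 hqsum r hr N hN
end
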